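/- arXiv:2311.17463 — 3 statements merged into one kernel-verified Lean document; each statement's English description precedes it below -/
import Mathlib

section
/- Let d ≥ 2 and let P be a tuple of n points in [0,1)^d. If either (d = 2 and n ≥ 4) or (d ≥ 3 and n ≥ 3), then the L∞ star discrepancy satisfies d*(P) ≥ 1/n. -/
open Finset

noncomputable section

open scoped Classical

/-- Number of points of the tuple `P` lying in the open anchored box `[0,q)`. -/
def openCount {n d : ℕ} (P : Fin n → Fin d → ℝ) (q : Fin d → ℝ) : ℕ :=
  (Finset.univ.filter (fun i : Fin n => ∀ j, P i j < q j)).card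

/-- Number of points of the tuple `P` lying in the closed anchored box `[0,q]`. -/
def closedCount {n d : ℕ} (P : Fin n → Fin d → ℝ) (q : Fin d → ℝ) : ℕ :=
  (Finset.univ.filter (fun i : Fin n => ∀ j, P i j ≤ q j)).card

/-- Open local discrepancy `δ(P,q) = ∏ q_j − #{i : x⁽ⁱ⁾ ∈ [0,q)}/n`. -/
def openDisc {n d : ℕ} (P : Fin n → Fin d → ℝ) (q : Fin d → ℝ) : ℝ :=
  (∏ j, q j) - (openCount P q : ℝ) / n

/-- Closed local discrepancy `δ̄(P,q) = #{i : x⁽ⁱ⁾ ∈ [0,q]}/n − ∏ q_j`. -/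
def closedDisc {n d : ℕ} (P : Fin n → Fin d → ℝ) (q : Fin d → ℝ) : ℝ :=
  (closedCount P q : ℝ) / n - ∏ j, q j

/-- `max(δ(P,q), δ̄(P,q))`. -/
def localDisc {n d : ℕ} (P : Fin n → Fin d → ℝ) (q : Fin d → ℝ) : ℝ :=
  max (openDisc P q) (closedDisc P q)

/-- The L∞ star discrepancy `d*(P) = sup_{q ∈ [0,1]^d} max(δ(P,q), δ̄(P,q))`. -/
def starDisc {n d : ℕ} (P : Fin n → Fin d → ℝ) : ℝ :=
  sSup {r : ℝ | ∃ q : Fin d → ℝ, (∀ j, q j ∈ Set.Icc (0:ℝ) 1) ∧ r = localDisc P q}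

/-!
Suppose `d*(P) < 1/n`. Then for every box, `n δ < 1` and `n δ̄ < 1`, so the closed box holds at
most one more point than the open one. Testing the slab `{x_j < k/n}` shows that the `j`-th
coordinates take exactly one value in each interval `[k/n, (k+1)/n)`. Choosing the corner `q` whose
`j`-th coordinate is that value for every `j`, the closed box `[0,q]` holds exactly the points of
`[0,(k+1)/n)^d` while `[0,q)` lies in `[0,k/n)^d`; so the cube `[0,k/n)^d` holds at least `k`
points, by descent from `k = n`. Two points in `[0,2/n)^d` span a closed box of volume at most
`(2/n)^d ≤ 1/n` containing both of them, which forces `δ̄ ≥ 1/n`.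
-/

section Discrepancy

variable {n d : ℕ} {P : Fin n → Fin d → ℝ} {q : Fin d → ℝ}

lemma openCount_le_closedCount : openCount P q ≤ closedCount P q :=
  card_le_card fun i hi => by
    simp only [mem_filter, mem_univ, true_and] at hi ⊢
    exact fun j => (hi j).le

lemma localDisc_le_starDisc (hq : ∀ j, q j ∈ Set.Icc (0:ℝ) 1) : localDisc P q ≤ starDisc P := by
  refine le_csSup ⟨1, ?_⟩ ⟨q, hq, rfl⟩
  rintro r ⟨q, hq, rfl⟩
  have hprod_nonneg : 0 ≤ ∏ j, q j := prod_nonneg fun j _ => (hq j).1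
  have hprod_le_one : ∏ j, q j ≤ 1 := prod_le_one (fun j _ => (hq j).1) fun j _ => (hq j).2
  have hclosed : (closedCount P q : ℝ) / n ≤ 1 := by
    refine div_le_one_of_le₀ ?_ n.cast_nonneg
    exact_mod_cast (card_filter_le _ _).trans (card_fin n).le
  refine max_le ?_ ?_
  · rw [openDisc]
    have : 0 ≤ (openCount P q : ℝ) / n := by positivity
    linarith
  · rw [closedDisc]
    linarith

variable (hn : 0 < n) (hdisc : starDisc P < 1 / n)
include hn hdisc

lemma lt_openCount_add_one (hq : ∀ j, q j ∈ Set.Icc (0:ℝ) 1) :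
    n * ∏ j, q j < openCount P q + 1 := by
  have h := (le_max_left _ _).trans_lt ((localDisc_le_starDisc hq).trans_lt hdisc)
  have hnR : (0:ℝ) < n := by exact_mod_cast hn
  unfold openDisc at h
  rw [sub_lt_iff_lt_add, ← add_div, lt_div_iff₀ hnR] at h
  linarith

lemma closedCount_lt_add_one (hq : ∀ j, q j ∈ Set.Icc (0:ℝ) 1) :
    closedCount P q < n * ∏ j, q j + 1 := by
  have h := (le_max_right _ _).trans_lt ((localDisc_le_starDisc hq).trans_lt hdisc)
  have hnR : (0:ℝ) < n := by exact_mod_cast hn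
  unfold closedDisc at h
  rw [sub_lt_iff_lt_add', div_lt_iff₀ hnR, add_mul, one_div_mul_cancel hnR.ne'] at h
  linarith

lemma closedCount_le_openCount_add_one (hq : ∀ j, q j ∈ Set.Icc (0:ℝ) 1) :
    closedCount P q ≤ openCount P q + 1 := by
  have h : (closedCount P q : ℝ) < openCount P q + 2 := by
    linarith [lt_openCount_add_one hn hdisc hq, closedCount_lt_add_one hn hdisc hq]
  have h' : closedCount P q < openCount P q + 2 := by exact_mod_cast h
  omega

end Discrepancy

section Coordinates

variable {n d : ℕ} {P : Fin n → Fin d → ℝ}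

lemma openCount_update_one (hP : ∀ i j, P i j ∈ Set.Ico (0:ℝ) 1) (j : Fin d) (x : ℝ) :
    openCount P (Function.update 1 j x) = #{i | P i j < x} := by
  refine congrArg card (filter_congr fun i _ => ⟨fun h => by simpa using h j, fun h j' => ?_⟩)
  rcases eq_or_ne j' j with rfl | hj
  · simpa using h
  · simpa [hj] using (hP i j').2

lemma closedCount_update_one (hP : ∀ i j, P i j ∈ Set.Ico (0:ℝ) 1) (j : Fin d) (x : ℝ) :
    closedCount P (Function.update 1 j x) = #{i | P i j ≤ x} := by
  refine congrArg card (filter_congr fun i _ => ⟨fun h => by simpa using h j, fun h j' => ?_⟩)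
  rcases eq_or_ne j' j with rfl | hj
  · simpa using h
  · simpa [hj] using (hP i j').2.le

variable (hn : 0 < n) (hdisc : starDisc P < 1 / n) (hP : ∀ i j, P i j ∈ Set.Ico (0:ℝ) 1)
include hn hdisc hP

lemma card_coord_lt_eq (j : Fin d) {k : ℕ} (hk : k ≤ n) : #{i | P i j < k / n} = k := by
  have hnR : (0:ℝ) < n := by exact_mod_cast hn
  have hkn : (k : ℝ) / n ∈ Set.Icc (0:ℝ) 1 :=
    ⟨by positivity, div_le_one_of_le₀ (by exact_mod_cast hk) hnR.le⟩
  set q := Function.update (1 : Fin d → ℝ) j (k / n)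
  have hq : ∀ j', q j' ∈ Set.Icc (0:ℝ) 1 := by
    intro j'
    rcases eq_or_ne j' j with rfl | hj
    · simpa [q] using hkn
    · simp [q, hj]
  have hvol : (n : ℝ) * ∏ j', q j' = k := by
    simp [q, prod_update_of_mem (mem_univ j), mul_div_cancel₀ _ hnR.ne']
  have hopen := lt_openCount_add_one hn hdisc hq
  have hclosed := closedCount_lt_add_one hn hdisc hq
  rw [hvol, openCount_update_one hP] at hopen
  rw [hvol, closedCount_update_one hP] at hclosed
  have hle := openCount_le_closedCount (P := P) (q := q)
  rw [openCount_update_one hP, closedCount_update_one hP] at hle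
  have hopen' : k < #{i | P i j < k / n} + 1 := by exact_mod_cast hopen
  have hclosed' : #{i | P i j ≤ k / n} < k + 1 := by exact_mod_cast hclosed
  omega

lemma existsUnique_coord_mem_Ico (j : Fin d) {k : ℕ} (hk : k < n) :
    ∃! i, P i j ∈ Set.Ico (k / n : ℝ) ((k + 1 : ℕ) / n) := by
  rw [Fintype.existsUnique_iff_card_one]
  have hsub : ({i | P i j < k / n} : Finset (Fin n)) ⊆
      ({i | P i j < (k + 1 : ℕ) / n} : Finset (Fin n)) := by
    intro i hi
    simp only [mem_filter, mem_univ, true_and] at hi ⊢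
    exact hi.trans_le (by gcongr; simp)
  have hslab : ({i | P i j ∈ Set.Ico (k / n : ℝ) ((k + 1 : ℕ) / n)} : Finset (Fin n)) =
      ({i | P i j < (k + 1 : ℕ) / n} : Finset (Fin n)) \
        ({i | P i j < k / n} : Finset (Fin n)) := by
    ext i
    simp [and_comm, not_lt]
  rw [hslab, card_sdiff_of_subset hsub, card_coord_lt_eq hn hdisc hP j hk,
    card_coord_lt_eq hn hdisc hP j hk.le]
  omega

lemma openCount_cube_succ_le {k : ℕ} (hk : k < n) :
    openCount P (fun _ => ((k + 1 : ℕ) : ℝ) / n) ≤ openCount P (fun _ => (k : ℝ) / n) + 1 := by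
  choose t ht huniq using fun j => existsUnique_coord_mem_Ico hn hdisc hP j hk
  set q : Fin d → ℝ := fun j => P (t j) j
  have hq : ∀ j, q j ∈ Set.Icc (0:ℝ) 1 := fun j => ⟨(hP _ _).1, (hP _ _).2.le⟩
  have hclosed : closedCount P q = openCount P (fun _ => ((k + 1 : ℕ) : ℝ) / n) := by
    refine congrArg card (filter_congr fun i _ =>
      ⟨fun h j => (h j).trans_lt (ht j).2, fun h j => ?_⟩)
    by_cases hi : (k : ℝ) / n ≤ P i j
    · rw [huniq j i ⟨hi, h j⟩]
    · exact (not_le.mp hi).le.trans (ht j).1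
  have hopen : openCount P q ≤ openCount P (fun _ => (k : ℝ) / n) := by
    refine card_le_card fun i hi => ?_
    simp only [mem_filter, mem_univ, true_and] at hi ⊢
    intro j
    by_contra! hge
    have hit : i = t j := huniq j i ⟨hge, (hi j).trans (ht j).2⟩
    exact (hi j).ne (by rw [hit])
  have := closedCount_le_openCount_add_one hn hdisc hq
  omega

lemma le_openCount_cube {k : ℕ} (hk : k ≤ n) : k ≤ openCount P (fun _ => (k : ℝ) / n) := by
  induction hk using Nat.decreasingInduction with
  | self =>
    have hall : ∀ i, ∀ j, P i j < (n : ℝ) / n := fun i j => by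
      rw [div_self (by exact_mod_cast hn.ne')]
      exact (hP i j).2
    simp [openCount, hall]
  | of_succ k hk ih =>
    have := openCount_cube_succ_le hn hdisc hP hk
    omega

end Coordinates

lemma two_pow_mul_le_pow {d n : ℕ} (h : (d = 2 ∧ 4 ≤ n) ∨ (3 ≤ d ∧ 3 ≤ n)) :
    2 ^ d * n ≤ n ^ d := by
  rcases h with ⟨rfl, hn⟩ | ⟨hd, hn⟩
  · nlinarith
  · obtain ⟨m, rfl⟩ := Nat.exists_eq_add_of_le' hd
    calc 2 ^ (m + 3) * n = 8 * 2 ^ m * n := by ring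
      _ ≤ 9 * 3 ^ m * n := by gcongr <;> norm_num
      _ = 3 ^ (m + 2) * n := by ring
      _ ≤ n ^ (m + 2) * n := by gcongr
      _ = n ^ (m + 3) := by ring

lemma two_le_closedCount_sup {n d : ℕ} {P : Fin n → Fin d → ℝ} {a b : Fin n} (hab : a ≠ b) :
    2 ≤ closedCount P (P a ⊔ P b) := by
  rw [← card_pair hab]
  refine card_le_card fun i hi => ?_
  rcases mem_insert.mp hi with rfl | hi
  · simp
  · simp [mem_singleton.mp hi]

theorem stmt_0_general {d n : ℕ} (P : Fin n → Fin d → ℝ)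
    (hP : ∀ i j, P i j ∈ Set.Ico (0:ℝ) 1)
    (h : (d = 2 ∧ 4 ≤ n) ∨ (3 ≤ d ∧ 3 ≤ n)) :
    1 / (n : ℝ) ≤ starDisc P := by
  by_contra! hdisc
  have hn : 2 ≤ n := by omega
  obtain ⟨a, ha, b, hb, hab⟩ := one_lt_card.mp (le_openCount_cube (by omega) hdisc hP hn)
  simp only [mem_filter, mem_univ, true_and] at ha hb
  have hq : ∀ j, (P a ⊔ P b) j ∈ Set.Icc (0:ℝ) 1 := fun j =>
    ⟨le_sup_of_le_left (hP a j).1, sup_le (hP a j).2.le (hP b j).2.le⟩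
  have hvol : (n : ℝ) * ∏ j, (P a ⊔ P b) j ≤ 1 :=
    calc (n : ℝ) * ∏ j, (P a ⊔ P b) j ≤ n * ∏ _j : Fin d, (2 / n : ℝ) :=
          mul_le_mul_of_nonneg_left
            (prod_le_prod (fun j _ => (hq j).1) fun j _ => sup_le (ha j).le (hb j).le)
            n.cast_nonneg
      _ = 2 ^ d * n / n ^ d := by rw [prod_const, card_univ, Fintype.card_fin, div_pow]; ring
      _ ≤ 1 := div_le_one_of_le₀ (by exact_mod_cast two_pow_mul_le_pow h) (by positivity)
  have hclosed := closedCount_lt_add_one (by omega) hdisc hq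
  have htwo : (2 : ℝ) ≤ closedCount P (P a ⊔ P b) := by exact_mod_cast two_le_closedCount_sup hab
  linarith

/-- If `d = 2` and `n ≥ 4`, or `d ≥ 3` and `n ≥ 3`, then any tuple of `n`
points in `[0,1)^d` has L∞ star discrepancy at least `1/n`. -/
theorem stmt_0 {d n : ℕ} (hd : 2 ≤ d) (P : Fin n → Fin d → ℝ)
    (hP : ∀ i j, P i j ∈ Set.Ico (0:ℝ) 1)
    (h : (d = 2 ∧ 4 ≤ n) ∨ (3 ≤ d ∧ 3 ≤ n)) :
    1 / (n : ℝ) ≤ starDisc P :=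
  stmt_0_general P hP h
end
end

section
/- Let d ≥ 2 and let P be a tuple of n ≥ 1 points in [0,1)^d. If there exist two points x and y of P with x_1 > y_1 and x_2 < y_2, then d*(P) ≥ 1/n. -/
open Finset

noncomputable section

open scoped Classical

/-- If two points `x, y` of `P ⊆ [0,1)^d` (`d ≥ 2`, `n ≥ 1`) satisfy
`x₁ > y₁` and `x₂ < y₂`, then `d*(P) ≥ 1/n`. -/
theorem stmt_2 {d n : ℕ} (hd : 2 ≤ d) (hn : 1 ≤ n) (P : Fin n → Fin d → ℝ)
    (hP : ∀ i j, P i j ∈ Set.Ico (0:ℝ) 1)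
    (hxy : ∃ a b : Fin n, P b ⟨0, by omega⟩ < P a ⟨0, by omega⟩ ∧
      P a ⟨1, by omega⟩ < P b ⟨1, by omega⟩) :
    1 / (n : ℝ) ≤ starDisc P := by
  obtain ⟨a, b, h0, h1⟩ := hxy
  have hnpos : (0:ℝ) < n := by exact_mod_cast hn
  set j0 : Fin d := ⟨0, by omega⟩
  set j1 : Fin d := ⟨1, by omega⟩
  set q : Fin d → ℝ := fun j => if j = j0 then P a j0 else if j = j1 then P b j1
    else max (P a j) (P b j) with hq
  have hq01 : ∀ j, q j ∈ Set.Icc (0:ℝ) 1 := by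
    intro j
    simp only [hq]
    split_ifs with h h'
    · exact ⟨(hP a j0).1, le_of_lt (hP a j0).2⟩
    · exact ⟨(hP b j1).1, le_of_lt (hP b j1).2⟩
    · constructor
      · exact le_max_of_le_left (hP a j).1
      · exact max_le (le_of_lt (hP a j).2) (le_of_lt (hP b j).2)
  -- a and b are in the closed box
  have haC : ∀ j, P a j ≤ q j := by
    intro j
    simp only [hq]
    split_ifs with h h'
    · subst h; exact le_rfl
    · subst h'; exact le_of_lt h1
    · exact le_max_left _ _
  have hbC : ∀ j, P b j ≤ q j := by
    intro j
    simp only [hq]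
    split_ifs with h h'
    · subst h; exact le_of_lt h0
    · subst h'; exact le_rfl
    · exact le_max_right _ _
  -- a and b are not in the open box
  have haO : ¬ (∀ j, P a j < q j) := by
    intro h
    have := h j0
    simp only [hq, if_pos rfl] at this
    exact lt_irrefl _ this
  have hbO : ¬ (∀ j, P b j < q j) := by
    intro h
    have := h j1
    have hne : j1 ≠ j0 := by simp [j0, j1, Fin.ext_iff]
    simp only [hq, if_neg hne, if_pos rfl] at this
    exact lt_irrefl _ this
  have hab : a ≠ b := by
    intro h; subst h; exact lt_irrefl _ h0
  -- card inequality
  set S := Finset.univ.filter (fun i : Fin n => ∀ j, P i j < q j) with hS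
  set T := Finset.univ.filter (fun i : Fin n => ∀ j, P i j ≤ q j) with hT
  have haS : a ∉ S := by simp [hS, haO]
  have hbS : b ∉ S := by simp [hS, hbO]
  have hsub : insert a (insert b S) ⊆ T := by
    intro i hi
    simp only [Finset.mem_insert] at hi
    rcases hi with rfl | rfl | hi
    · simp [hT, haC]
    · simp [hT, hbC]
    · simp only [hS, Finset.mem_filter] at hi
      simp only [hT, Finset.mem_filter]
      exact ⟨hi.1, fun j => le_of_lt (hi.2 j)⟩
  have hcard : S.card + 2 ≤ T.card := by
    have h1' : (insert a (insert b S)).card = S.card + 2 := by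
      rw [Finset.card_insert_of_notMem (by simp [hab, haS]),
        Finset.card_insert_of_notMem hbS]
    calc S.card + 2 = (insert a (insert b S)).card := h1'.symm
      _ ≤ T.card := Finset.card_le_card hsub
  have hcc : openCount P q = S.card := rfl
  have htc : closedCount P q = T.card := rfl
  have hsum : 2 / (n:ℝ) ≤ openDisc P q + closedDisc P q := by
    unfold openDisc closedDisc
    rw [hcc, htc]
    have : (S.card:ℝ) + 2 ≤ (T.card:ℝ) := by exact_mod_cast hcard
    have key : (2:ℝ)/n ≤ ((T.card:ℝ) - S.card)/n := by
      gcongr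
      linarith
    have expand : ((T.card:ℝ) - S.card)/n = (T.card:ℝ)/n - (S.card:ℝ)/n := by ring
    linarith [expand ▸ key]
  have hloc : 1 / (n:ℝ) ≤ localDisc P q := by
    unfold localDisc
    by_contra hcon
    push_neg at hcon
    have ho : openDisc P q < 1 / n := lt_of_le_of_lt (le_max_left _ (closedDisc P q)) hcon
    have hc : closedDisc P q < 1 / n := lt_of_le_of_lt (le_max_right (openDisc P q) _) hcon
    have : openDisc P q + closedDisc P q < 2 / n := by
      have : (2:ℝ)/n = 1/n + 1/n := by ring
      rw [this]; linarith
    linarith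
  -- now starDisc
  have hmem : localDisc P q ∈ {r : ℝ | ∃ q' : Fin d → ℝ,
      (∀ j, q' j ∈ Set.Icc (0:ℝ) 1) ∧ r = localDisc P q'} := ⟨q, hq01, rfl⟩
  have hbdd : BddAbove {r : ℝ | ∃ q' : Fin d → ℝ,
      (∀ j, q' j ∈ Set.Icc (0:ℝ) 1) ∧ r = localDisc P q'} := by
    refine ⟨1, fun r hr => ?_⟩
    obtain ⟨q', hq', rfl⟩ := hr
    have hprod0 : (0:ℝ) ≤ ∏ j, q' j :=
      Finset.prod_nonneg fun j _ => (hq' j).1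
    have hprod1 : (∏ j, q' j) ≤ 1 :=
      Finset.prod_le_one (fun j _ => (hq' j).1) (fun j _ => (hq' j).2)
    have hc1 : (closedCount P q' : ℝ) ≤ n := by
      have : closedCount P q' ≤ n := by
        unfold closedCount
        simpa using Finset.card_filter_le (Finset.univ : Finset (Fin n))
          (fun i => ∀ j, P i j ≤ q' j)
      exact_mod_cast this
    have ho0 : (0:ℝ) ≤ (openCount P q' : ℝ) / n := by positivity
    unfold localDisc openDisc closedDisc
    apply max_le
    · linarith
    · have : (closedCount P q' : ℝ) / n ≤ 1 := by
        rw [div_le_one hnpos]; exact hc1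
      linarith
  exact le_trans hloc (le_csSup hbdd hmem)
end
end

section
/- Let P* be an optimal tuple of n points in [0,1]^2. Then for every admissible up-shift up(P*,i,δ) and every q ∈ [0,1]^2, the open local discrepancy satisfies δ(up(P*,i,δ), q) ≤ d*(P*). Analogously, for every admissible right-shift ri(P*,i,δ) and every q ∈ [0,1]^2, δ(ri(P*,i,δ), q) ≤ d*(P*). -/
open Finset

noncomputable section

open scoped Classical

/-- A tuple of `n` points in `[0,1]^2` is optimal if its star discrepancy is minimal
among all `n`-point tuples in `[0,1]^2`. -/
def IsOptimal {n : ℕ} (P : Fin n → Fin 2 → ℝ) : Prop :=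
  (∀ i j, P i j ∈ Set.Icc (0:ℝ) 1) ∧
    ∀ Q : Fin n → Fin 2 → ℝ, (∀ i j, Q i j ∈ Set.Icc (0:ℝ) 1) → starDisc P ≤ starDisc Q

/-- Up-shift: replace `x⁽ⁱ⁾` by `(x⁽ⁱ⁾₁, x⁽ⁱ⁾₂ + δ)`. -/
def upShift {n : ℕ} (P : Fin n → Fin 2 → ℝ) (i : Fin n) (δ : ℝ) : Fin n → Fin 2 → ℝ :=
  Function.update P i (fun j => P i j + if j = (1 : Fin 2) then δ else 0)

/-- Right-shift: replace `x⁽ⁱ⁾` by `(x⁽ⁱ⁾₁ + δ, x⁽ⁱ⁾₂)`. -/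
def rightShift {n : ℕ} (P : Fin n → Fin 2 → ℝ) (i : Fin n) (δ : ℝ) : Fin n → Fin 2 → ℝ :=
  Function.update P i (fun j => P i j + if j = (0 : Fin 2) then δ else 0)

/-- Down-shift: replace `x⁽ⁱ⁾` by `(x⁽ⁱ⁾₁, x⁽ⁱ⁾₂ − δ)`. -/
def downShift {n : ℕ} (P : Fin n → Fin 2 → ℝ) (i : Fin n) (δ : ℝ) : Fin n → Fin 2 → ℝ :=
  Function.update P i (fun j => P i j - if j = (1 : Fin 2) then δ else 0)

/-- Left-shift: replace `x⁽ⁱ⁾` by `(x⁽ⁱ⁾₁ − δ, x⁽ⁱ⁾₂)`. -/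
def leftShift {n : ℕ} (P : Fin n → Fin 2 → ℝ) (i : Fin n) (δ : ℝ) : Fin n → Fin 2 → ℝ :=
  Function.update P i (fun j => P i j - if j = (0 : Fin 2) then δ else 0)

/-- An up-shift of `x⁽ⁱ⁾` by `δ` is admissible if some other point lies (weakly) below-left
of `x⁽ⁱ⁾` and `δ ≤ 1/n − min{x⁽ⁱ⁾₂ − x⁽ᵏ⁾₂ : k ≠ i, x⁽ᵏ⁾ ≤ x⁽ⁱ⁾}`. -/
def AdmissibleUp {n : ℕ} (P : Fin n → Fin 2 → ℝ) (i : Fin n) (δ : ℝ) : Prop :=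
  (∃ k, k ≠ i ∧ ∀ j, P k j ≤ P i j) ∧
    δ ≤ 1 / n - sInf {t : ℝ | ∃ k, k ≠ i ∧ (∀ j, P k j ≤ P i j) ∧ t = P i 1 - P k 1}

/-- Admissibility of a right-shift (same as `AdmissibleUp` with the first coordinate). -/
def AdmissibleRight {n : ℕ} (P : Fin n → Fin 2 → ℝ) (i : Fin n) (δ : ℝ) : Prop :=
  (∃ k, k ≠ i ∧ ∀ j, P k j ≤ P i j) ∧
    δ ≤ 1 / n - sInf {t : ℝ | ∃ k, k ≠ i ∧ (∀ j, P k j ≤ P i j) ∧ t = P i 0 - P k 0}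

/-- A down-shift of `x⁽ⁱ⁾` by `δ` is admissible if some other point lies (weakly) above-right
of `x⁽ⁱ⁾` and `δ ≤ 1/n − min{x⁽ᵏ⁾₂ − x⁽ⁱ⁾₂ : k ≠ i, x⁽ᵏ⁾ ≥ x⁽ⁱ⁾}`. -/
def AdmissibleDown {n : ℕ} (P : Fin n → Fin 2 → ℝ) (i : Fin n) (δ : ℝ) : Prop :=
  (∃ k, k ≠ i ∧ ∀ j, P i j ≤ P k j) ∧
    δ ≤ 1 / n - sInf {t : ℝ | ∃ k, k ≠ i ∧ (∀ j, P i j ≤ P k j) ∧ t = P k 1 - P i 1}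

/-- Admissibility of a left-shift (same as `AdmissibleDown` with the first coordinate). -/
def AdmissibleLeft {n : ℕ} (P : Fin n → Fin 2 → ℝ) (i : Fin n) (δ : ℝ) : Prop :=
  (∃ k, k ≠ i ∧ ∀ j, P i j ≤ P k j) ∧
    δ ≤ 1 / n - sInf {t : ℝ | ∃ k, k ≠ i ∧ (∀ j, P i j ≤ P k j) ∧ t = P k 0 - P i 0}

/-!
Moving `x⁽ⁱ⁾` upwards (or to the right) can only remove `x⁽ⁱ⁾` from an open box `[0,q)`,
lowering the count by one. When that happens, take the point `x⁽ᵏ⁾ ≤ x⁽ⁱ⁾` realising the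
minimum in the admissibility condition and shrink `q` in the shifted coordinate down to
`x⁽ᵏ⁾`. The smaller box loses at least the two points `x⁽ⁱ⁾` and `x⁽ᵏ⁾`, while its volume
drops by at most `1/n` because `q_a ≤ x⁽ⁱ⁾_a + δ ≤ x⁽ᵏ⁾_a + 1/n`. Hence the open local
discrepancy of the shifted tuple at `q` is dominated by that of the original tuple at the
smaller box, which is at most `d*`.
-/

section Discrepancy

variable {n d : ℕ}

lemma localDisc_le_one (P : Fin n → Fin d → ℝ) {q : Fin d → ℝ}
    (hq : ∀ j, q j ∈ Set.Icc (0:ℝ) 1) : localDisc P q ≤ 1 := by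
  have hprod_nonneg : 0 ≤ ∏ j, q j := prod_nonneg fun j _ => (hq j).1
  have hprod_le : ∏ j, q j ≤ 1 := prod_le_one (fun j _ => (hq j).1) (fun j _ => (hq j).2)
  have hcount : (closedCount P q : ℝ) / n ≤ 1 := by
    apply div_le_one_of_le₀ _ n.cast_nonneg
    exact_mod_cast (card_filter_le _ _).trans_eq (card_fin n)
  have : (0:ℝ) ≤ (openCount P q : ℝ) / n := by positivity
  exact max_le (by unfold openDisc; linarith) (by unfold closedDisc; linarith)

lemma openDisc_le_starDisc (P : Fin n → Fin d → ℝ) {q : Fin d → ℝ}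
    (hq : ∀ j, q j ∈ Set.Icc (0:ℝ) 1) : openDisc P q ≤ starDisc P := by
  have hbdd : BddAbove
      {r : ℝ | ∃ q : Fin d → ℝ, (∀ j, q j ∈ Set.Icc (0:ℝ) 1) ∧ r = localDisc P q} := by
    refine ⟨1, ?_⟩
    rintro r ⟨q', hq', rfl⟩
    exact localDisc_le_one P hq'
  exact (le_max_left _ _).trans (le_csSup hbdd ⟨q, hq, rfl⟩)

lemma openCount_update_of_iff (P : Fin n → Fin d → ℝ) {i : Fin n} {x q : Fin d → ℝ}
    (h : (∀ j, x j < q j) ↔ ∀ j, P i j < q j) :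
    openCount (Function.update P i x) q = openCount P q := by
  unfold openCount
  congr 1
  ext m
  by_cases hm : m = i
  · subst hm; simp [h]
  · simp [hm]

lemma openCount_update_add_one (P : Fin n → Fin d → ℝ) {i : Fin n} {x q : Fin d → ℝ}
    (hin : ∀ j, P i j < q j) (hout : ¬ ∀ j, x j < q j) :
    openCount (Function.update P i x) q + 1 = openCount P q := by
  have hfilter : univ.filter (fun m => ∀ j, Function.update P i x m j < q j)
      = (univ.filter fun m => ∀ j, P m j < q j).erase i := by
    ext m
    by_cases hm : m = i
    · subst hm; simp [hout]
    · simp [hm]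
  unfold openCount
  rw [hfilter, card_erase_add_one]
  simpa using hin

lemma openCount_update_coord_add_two_le (P : Fin n → Fin d → ℝ) {i k : Fin n} (hki : k ≠ i)
    (hk : P k ≤ P i) (a : Fin d) {q : Fin d → ℝ} (hin : ∀ j, P i j < q j) :
    openCount P (Function.update q a (P k a)) + 2 ≤ openCount P q := by
  set s := univ.filter fun m => ∀ j, P m j < Function.update q a (P k a) j
  have hk_notMem : k ∉ s := by
    simp only [s, mem_filter, mem_univ, true_and, not_forall, not_lt]
    exact ⟨a, by simp⟩
  have hi_notMem : i ∉ insert k s := by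
    simp only [s, mem_insert, mem_filter, mem_univ, true_and, not_or, not_forall, not_lt]
    exact ⟨hki.symm, a, by simpa using hk a⟩
  have hsub : insert i (insert k s) ⊆ univ.filter fun m => ∀ j, P m j < q j := by
    intro m hm
    simp only [s, mem_insert, mem_filter, mem_univ, true_and] at hm ⊢
    rcases hm with rfl | rfl | hm
    · exact hin
    · exact fun j => (hk j).trans_lt (hin j)
    · intro j
      by_cases hj : j = a
      · subst hj
        have := hm j
        simp only [Function.update_self] at this
        exact this.trans_le ((hk j).trans (hin j).le)
      · simpa [hj] using hm j
  have := card_le_card hsub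
  rw [card_insert_of_notMem hi_notMem, card_insert_of_notMem hk_notMem] at this
  exact this

lemma prod_le_prod_update_add {q : Fin d → ℝ} (hq : ∀ j, q j ∈ Set.Icc (0:ℝ) 1) {a : Fin d}
    {s ε : ℝ} (hε : 0 ≤ ε) (ha : q a ≤ s + ε) :
    ∏ j, q j ≤ ∏ j, Function.update q a s j + ε := by
  rw [← mul_prod_erase univ q (mem_univ a), prod_update_of_mem (mem_univ a),
    sdiff_singleton_eq_erase]
  set R := ∏ j ∈ univ.erase a, q j
  have hR_nonneg : 0 ≤ R := prod_nonneg fun j _ => (hq j).1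
  have hR_le : R ≤ 1 := prod_le_one (fun j _ => (hq j).1) (fun j _ => (hq j).2)
  nlinarith [mul_le_mul_of_nonneg_right ha hR_nonneg, mul_le_mul_of_nonneg_left hR_le hε]

lemma openDisc_update_le_starDisc {P : Fin n → Fin d → ℝ}
    (hP : ∀ i j, P i j ∈ Set.Icc (0:ℝ) 1) {i k : Fin n} (hki : k ≠ i) (hk : P k ≤ P i)
    {a : Fin d} {x : Fin d → ℝ} (hx : P i ≤ x) (hx_ne : ∀ j ≠ a, x j = P i j)
    (hxk : x a ≤ P k a + 1 / n) {q : Fin d → ℝ} (hq : ∀ j, q j ∈ Set.Icc (0:ℝ) 1) :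
    openDisc (Function.update P i x) q ≤ starDisc P := by
  by_cases hcrit : (∀ j, P i j < q j) ∧ ¬ ∀ j, x j < q j
  · obtain ⟨hin, hout⟩ := hcrit
    have hqa : q a ≤ x a := by
      push Not at hout
      obtain ⟨j, hj⟩ := hout
      by_cases hja : j = a
      · exact hja ▸ hj
      · exact absurd (hin j) (by rw [← hx_ne j hja]; exact hj.not_gt)
    set q' := Function.update q a (P k a)
    have hq' : ∀ j, q' j ∈ Set.Icc (0:ℝ) 1 := by
      intro j
      by_cases hja : j = a
      · subst hja; simpa [q'] using hP k j
      · simpa [q', hja] using hq j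
    have hcount := openCount_update_add_one P hin hout
    have hcount' := openCount_update_coord_add_two_le P hki hk a hin
    have hprod := prod_le_prod_update_add hq (by positivity) (hqa.trans hxk)
    have hdiv : (openCount P q' : ℝ) / n ≤ ((openCount P q : ℝ) - 2) / n := by
      gcongr
      exact le_sub_iff_add_le.mpr (by exact_mod_cast hcount')
    calc openDisc (Function.update P i x) q
        = ∏ j, q j - ((openCount P q : ℝ) - 1) / n := by
          rw [openDisc, ← hcount]; push_cast; ring_nf
      _ ≤ ∏ j, q' j - ((openCount P q : ℝ) - 2) / n := by
          have : (2:ℝ) / n = 1 / n + 1 / n := by ring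
          rw [sub_div, sub_div]; linarith
      _ ≤ openDisc P q' := by unfold openDisc; linarith
      _ ≤ starDisc P := openDisc_le_starDisc P hq'
  · have hiff : (∀ j, x j < q j) ↔ ∀ j, P i j < q j :=
      ⟨fun h j => (hx j).trans_lt (h j), fun h => by by_contra h'; exact hcrit ⟨h, h'⟩⟩
    rw [openDisc, openCount_update_of_iff P hiff]
    exact openDisc_le_starDisc P hq

lemma exists_le_add_one_div_of_le_sub_sInf {P : Fin n → Fin d → ℝ} {i : Fin n} {a : Fin d}
    {δ : ℝ} (hex : ∃ k, k ≠ i ∧ ∀ j, P k j ≤ P i j)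
    (hδ : δ ≤ 1 / n - sInf {t : ℝ | ∃ k, k ≠ i ∧ (∀ j, P k j ≤ P i j) ∧ t = P i a - P k a}) :
    ∃ k, k ≠ i ∧ P k ≤ P i ∧ P i a + δ ≤ P k a + 1 / n := by
  set S := {t : ℝ | ∃ k, k ≠ i ∧ (∀ j, P k j ≤ P i j) ∧ t = P i a - P k a}
  have hS : S.Nonempty := by
    obtain ⟨k, hki, hk⟩ := hex
    exact ⟨_, k, hki, hk, rfl⟩
  have hS_fin : S.Finite := (Set.finite_range fun k => P i a - P k a).subset
    (by rintro t ⟨k, -, -, rfl⟩; exact ⟨k, rfl⟩)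
  obtain ⟨k, hki, hk, hkS⟩ := hS.csInf_mem hS_fin
  exact ⟨k, hki, hk, by linarith⟩

lemma openDisc_shift_le_starDisc {P : Fin n → Fin d → ℝ}
    (hP : ∀ i j, P i j ∈ Set.Icc (0:ℝ) 1) {i : Fin n} {a : Fin d} {δ : ℝ} (hδ : 0 ≤ δ)
    (hex : ∃ k, k ≠ i ∧ ∀ j, P k j ≤ P i j)
    (hadm : δ ≤ 1 / n - sInf {t : ℝ | ∃ k, k ≠ i ∧ (∀ j, P k j ≤ P i j) ∧ t = P i a - P k a})
    {q : Fin d → ℝ} (hq : ∀ j, q j ∈ Set.Icc (0:ℝ) 1) :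
    openDisc (Function.update P i fun j => P i j + if j = a then δ else 0) q ≤ starDisc P := by
  obtain ⟨k, hki, hk, hclose⟩ := exists_le_add_one_div_of_le_sub_sInf hex hadm
  refine openDisc_update_le_starDisc hP hki hk (a := a) (fun j => ?_) (fun j hj => ?_) ?_ hq
  · split_ifs <;> simp [hδ]
  · simp [hj]
  · simpa using hclose

end Discrepancy

/-- For an optimal `n`-point tuple `P*` in `[0,1]²`, any admissible up-shift
(resp. right-shift) never violates an open-box constraint: the open local discrepancy of the
shifted tuple at any `q ∈ [0,1]²` is at most `d*(P*)`. -/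
theorem stmt_5 {n : ℕ} (P : Fin n → Fin 2 → ℝ) (hopt : IsOptimal P) (i : Fin n) (δ : ℝ)
    (q : Fin 2 → ℝ) (hq : ∀ j, q j ∈ Set.Icc (0:ℝ) 1) :
    (0 < δ → δ ≤ 1 - P i 1 → AdmissibleUp P i δ →
      openDisc (upShift P i δ) q ≤ starDisc P) ∧
    (0 < δ → δ ≤ 1 - P i 0 → AdmissibleRight P i δ →
      openDisc (rightShift P i δ) q ≤ starDisc P) :=
  ⟨fun hδ _ hadm => openDisc_shift_le_starDisc hopt.1 hδ.le hadm.1 hadm.2 hq,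
    fun hδ _ hadm => openDisc_shift_le_starDisc hopt.1 hδ.le hadm.1 hadm.2 hq⟩
end
end
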